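/- Let $\mathcal{P}$ be a collection of subobjects of a variety (modeled as a set $\mathcal{P}$ with a partial order $\subseteq$ and a monotone dimension function $\dim : \mathcal{P} \to \mathbb{N}$), together with two functions $\langle \cdot \rangle, \langle \cdot \rangle_{\mathrm{ws}} : \mathcal{P} \to \mathcal{P}$ satisfying $A \subseteq \langle A \rangle_{\mathrm{ws}} \subseteq \langle A \rangle$ and monotonicity of both. Define $\delta(A) = \dim\langle A\rangle - \dim A$ and $\delta_{\mathrm{ws}}(A) = \dim\langle A\rangle_{\mathrm{ws}} - \dim A$. Say the defect condition holds if for all $A \subseteq B$ one has $\delta(B) - \delta_{\mathrm{ws}}(B) \le \delta(A) - \delta_{\mathrm{ws}}(A)$. Call $A \in \mathcal{P}$ with $A \subseteq Z$ optimal in $Z$ if for all $B$ with $A \subseteq B \subseteq Z$ and $\delta(B) \le \delta(A)$ one has $B = A$; define geodesic optimal analogously with $\delta_{\mathrm{ws}}$. Prove: if the defect condition holds, then every optimal subobject of $Z$ is geodesic optimal in $Z$. -/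
import Mathlib


/-- Under the defect condition, an optimal subobject is geodesic optimal. -/
theorem stmt_1 {P : Type*} [PartialOrder P] (dim : P → ℤ) (hdim : Monotone dim)
    (sp ws : P → P)
    (hws_ext : ∀ A, A ≤ ws A) (hws_sp : ∀ A, ws A ≤ sp A)
    (hsp_mono : Monotone sp) (hws_mono : Monotone ws)
    (defcond : ∀ A B : P, A ≤ B →
      (dim (sp B) - dim B) - (dim (ws B) - dim B) ≤
        (dim (sp A) - dim A) - (dim (ws A) - dim A))
    (Z A : P) (hAZ : A ≤ Z)
    (hopt : ∀ B, A ≤ B → B ≤ Z → dim (sp B) - dim B ≤ dim (sp A) - dim A → B = A) :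
    ∀ B, A ≤ B → B ≤ Z → dim (ws B) - dim B ≤ dim (ws A) - dim A → B = A := by
  intro B hAB hBZ hws
  exact hopt B hAB hBZ (by have := defcond A B hAB; linarith)
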